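/- With the non-simply laced Cartan data of the context, for every family n of nonnegative integers on J_k one has the telescoped form: L_k(n) = Σ_{j=1}^{k} [ N°_j · Λ° N°_j + Σ_{i=t_0(j−1)+1}^{t_0 j} ( N•_i · Λ• N•_i + 2 N°_j · A N•_i ) ], where N_{α,i} = Σ_{j=i}^{t_α k} n_{α,j} are the tail partial sums, N°_j = (N_{α,j})_{α∈Π_○} and N•_i = (N_{α,i})_{α∈Π_•}. -/

import Mathlib

open Finset

/-- `L_k(n) = Σ_{(α,i),(β,j)∈J_k} (Λ_{αβ}/t_α) min(t_α j, t_β i) n_{α,i} n_{β,j}`. -/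
def Lk (r : ℕ) (t : Fin r → ℕ) (Λ : Fin r → Fin r → ℤ) (k : ℕ)
    (n : Fin r → ℕ → ℕ) : ℚ :=
  ∑ α, ∑ β, ∑ i ∈ Icc 1 (t α * k), ∑ j ∈ Icc 1 (t β * k),
    (Λ α β : ℚ) / (t α : ℚ) * ((min (t α * j) (t β * i) : ℕ) : ℚ)
      * (n α i : ℚ) * (n β j : ℚ)

/-- Tail partial sums `N_{α,i} = Σ_{j=i}^{t_α k} n_{α,j}`. -/
def tailSum (r : ℕ) (t : Fin r → ℕ) (k : ℕ) (n : Fin r → ℕ → ℕ)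
    (α : Fin r) (i : ℕ) : ℚ :=
  ∑ j ∈ Icc i (t α * k), (n α j : ℚ)

/-!
Counting `min (t_α j) (t_β i)` as the number of `m ≤ t_α t_β k` with `m ≤ t_α j` and
`m ≤ t_β i` turns the `(α, β)` part of `L_k(n)` into `(Λ_{αβ}/t_α) Σ_m N_{α,⌈m/t_β⌉} N_{β,⌈m/t_α⌉}`.
Since every `t_α` is `1` or `t₀`, cutting the range of `m` into blocks of length `t₀`, on which
`⌈m/t₀⌉` is constant, produces the three kinds of terms. The two mixed parts are equal because
`(Λ_{αβ}/t_α)` is symmetric: it is `δ` times the inverse of the symmetric matrix `(t_β C_{αβ})`.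
-/

open scoped Matrix

theorem Nat.filter_Icc_le_mul {s m : ℕ} (hs : 0 < s) (hm : 1 ≤ m) (A : ℕ) :
    (Icc 1 A).filter (fun i => m ≤ s * i) = Icc (m ⌈/⌉ s) A := by
  ext i
  have : 1 ≤ m ⌈/⌉ s := by
    by_contra! h
    rw [Nat.lt_one_iff, ← Nat.le_zero, ceilDiv_le_iff_le_mul hs] at h
    omega
  simp only [mem_filter, mem_Icc, ← ceilDiv_le_iff_le_mul hs]
  omega

theorem Nat.cast_min_eq_sum_ite {R : Type*} [AddCommMonoidWithOne R] {a b M : ℕ} (ha : a ≤ M) :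
    ((min a b : ℕ) : R) = ∑ m ∈ Icc 1 M, if m ≤ b then (if m ≤ a then 1 else 0) else 0 := by
  simp only [← ite_and, sum_boole]
  have : (Icc 1 M).filter (fun m => m ≤ b ∧ m ≤ a) = Icc 1 (min a b) := by
    ext m
    simp only [mem_Icc, mem_filter]
    omega
  rw [this, Nat.card_Icc, add_tsub_cancel_right]

theorem sum_sum_min_mul_mul_eq_sum_mul_sum {R : Type*} [CommSemiring R] {s u : ℕ}
    (hs : 0 < s) (hu : 0 < u) (A B : ℕ) (x y : ℕ → R) :
    ∑ i ∈ Icc 1 A, ∑ j ∈ Icc 1 B, ((min (s * j) (u * i) : ℕ) : R) * x i * y j =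
      ∑ m ∈ Icc 1 (s * B), (∑ i ∈ Icc (m ⌈/⌉ u) A, x i) * ∑ j ∈ Icc (m ⌈/⌉ s) B, y j := by
  calc _ = ∑ i ∈ Icc 1 A, ∑ j ∈ Icc 1 B, ∑ m ∈ Icc 1 (s * B),
        (if m ≤ u * i then x i else 0) * (if m ≤ s * j then y j else 0) := by
        refine sum_congr rfl fun i _ => sum_congr rfl fun j hj => ?_
        rw [Nat.cast_min_eq_sum_ite (Nat.mul_le_mul_left s (mem_Icc.1 hj).2), sum_mul, sum_mul]
        refine sum_congr rfl fun m _ => ?_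
        split_ifs <;> simp
    _ = ∑ m ∈ Icc 1 (s * B), (∑ i ∈ Icc 1 A, if m ≤ u * i then x i else 0) *
          ∑ j ∈ Icc 1 B, if m ≤ s * j then y j else 0 := by
        simp_rw [sum_mul_sum]
        exact (sum_congr rfl fun _ _ => sum_comm).trans sum_comm
    _ = _ := by
        refine sum_congr rfl fun m hm => ?_
        have hm : 1 ≤ m := (mem_Icc.1 hm).1
        rw [← sum_filter, ← sum_filter, Nat.filter_Icc_le_mul hu hm, Nat.filter_Icc_le_mul hs hm]

theorem Nat.ceilDiv_eq_of_mem_Icc {t j m : ℕ} (ht : 0 < t)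
    (hm : m ∈ Icc (t * (j - 1) + 1) (t * j)) : m ⌈/⌉ t = j := by
  rw [mem_Icc] at hm
  apply le_antisymm ((ceilDiv_le_iff_le_mul ht).2 hm.2)
  by_contra! h
  have := (ceilDiv_le_iff_le_mul ht).1 (Nat.le_sub_one_of_lt h)
  omega

theorem sum_Icc_mul_eq_sum_sum_Icc {M : Type*} [AddCommMonoid M] (t K : ℕ) (g : ℕ → M) :
    ∑ m ∈ Icc 1 (t * K), g m = ∑ j ∈ Icc 1 K, ∑ m ∈ Icc (t * (j - 1) + 1) (t * j), g m := by
  induction K with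
  | zero => simp
  | succ K ih =>
    have hIoc (a b : ℕ) : Icc (a + 1) b = Ioc a b := Icc_add_one_left_eq_Ioc a b
    rw [sum_Icc_succ_top (by omega), ← ih, add_tsub_cancel_right, hIoc, hIoc, hIoc]
    exact (sum_Ioc_consecutive _ (Nat.zero_le _) (Nat.mul_le_mul_left t (K.le_add_right 1))).symm

theorem sum_Icc_ceilDiv {M : Type*} [AddCommMonoid M] {t : ℕ} (ht : 0 < t) (K : ℕ)
    (h : ℕ → ℕ → M) :
    ∑ m ∈ Icc 1 (t * K), h (m ⌈/⌉ t) m =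
      ∑ j ∈ Icc 1 K, ∑ i ∈ Icc (t * (j - 1) + 1) (t * j), h j i := by
  rw [sum_Icc_mul_eq_sum_sum_Icc]
  exact sum_congr rfl fun j _ => sum_congr rfl fun m hm => by rw [Nat.ceilDiv_eq_of_mem_Icc ht hm]

theorem sum_Icc_comp_ceilDiv {M : Type*} [AddCommMonoid M] {t : ℕ} (ht : 0 < t) (K : ℕ)
    (g : ℕ → M) : ∑ m ∈ Icc 1 (t * K), g (m ⌈/⌉ t) = t • ∑ j ∈ Icc 1 K, g j := by
  rw [sum_Icc_ceilDiv ht K fun j _ => g j, smul_sum]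
  refine sum_congr rfl fun j hj => ?_
  rw [sum_const, Nat.card_Icc]
  congr 1
  obtain ⟨j, rfl⟩ := Nat.exists_eq_add_of_le' (mem_Icc.1 hj).1
  simp only [add_tsub_cancel_right, mul_add]
  omega

theorem Matrix.IsSymm.mul_of_mul_eq_smul {ι K : Type*} [Fintype ι] [Field K]
    {M N E : Matrix ι ι K} {δ : K} (hM : M.IsSymm) (hE : E.IsSymm) (hδ : δ ≠ 0)
    (h : M * N = δ • E) : (E * N).IsSymm := by
  refine smul_right_injective _ hδ (?_ : δ • (E * N)ᵀ = δ • (E * N))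
  calc δ • (E * N)ᵀ = Nᵀ * (M * N) := by
        rw [h, Matrix.transpose_mul, hE.eq, Matrix.mul_smul]
    _ = (M * N)ᵀ * N := by rw [Matrix.transpose_mul, hM.eq, Matrix.mul_assoc]
    _ = δ • (E * N) := by rw [h, Matrix.transpose_smul, hE.eq, Matrix.smul_mul]

theorem div_symmetrizer_comm_of_mul_eq {r : ℕ} {C Λ : Fin r → Fin r → ℤ} {t : Fin r → ℕ} {δ : ℤ}
    (htpos : ∀ α, 0 < t α) (hsym : ∀ α β, (t β : ℤ) * C α β = (t α : ℤ) * C β α)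
    (hδ : δ ≠ 0) (hCΛ : ∀ a b, ∑ ω, C a ω * Λ ω b = if a = b then δ else 0) (a b : Fin r) :
    (Λ a b : ℚ) / t a = Λ b a / t b := by
  have ht (α) : (t α : ℚ) ≠ 0 := by exact_mod_cast (htpos α).ne'
  have hM : (Matrix.of fun α β => (C α β : ℚ) / t α).IsSymm := by
    refine Matrix.IsSymm.ext fun α β => ?_
    rw [Matrix.of_apply, Matrix.of_apply, div_eq_div_iff (ht β) (ht α)]
    rw [mul_comm, mul_comm (C α β : ℚ)]
    exact_mod_cast (hsym α β).symm
  have hE : (Matrix.diagonal fun α => (t α : ℚ)⁻¹).IsSymm := Matrix.isSymm_diagonal _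
  have hME : (Matrix.of fun α β => (C α β : ℚ) / t α) * Matrix.of (fun α β => (Λ α β : ℚ)) =
      (δ : ℚ) • Matrix.diagonal fun α => (t α : ℚ)⁻¹ := by
    ext α β
    have := congrArg (Int.cast : ℤ → ℚ) (hCΛ α β)
    push_cast at this
    simp only [Matrix.mul_apply, Matrix.of_apply, div_mul_eq_mul_div, ← sum_div, this,
      Matrix.smul_apply, Matrix.diagonal_apply]
    split_ifs <;> simp [div_eq_mul_inv]
  have := (Matrix.IsSymm.mul_of_mul_eq_smul hM hE (by exact_mod_cast hδ) hME).apply b a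
  simpa [Matrix.diagonal_mul, inv_mul_eq_div] using this

section PairTerm

variable {r : ℕ} (t : Fin r → ℕ) (Λ : Fin r → Fin r → ℤ) (k : ℕ) (T : Fin r → ℕ → ℚ)

def pairTerm (a b : Fin r) : ℚ :=
  (Λ a b : ℚ) / t a * ∑ m ∈ Icc 1 (t a * (t b * k)), T a (m ⌈/⌉ t b) * T b (m ⌈/⌉ t a)

variable {t Λ}

theorem Lk_eq_sum_sum_pairTerm (htpos : ∀ α, 0 < t α) (n : Fin r → ℕ → ℕ) :
    Lk r t Λ k n = ∑ a, ∑ b, pairTerm t Λ k (tailSum r t k n) a b := by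
  unfold Lk pairTerm tailSum
  refine sum_congr rfl fun a _ => sum_congr rfl fun b _ => ?_
  rw [← sum_sum_min_mul_mul_eq_sum_mul_sum (htpos a) (htpos b), mul_sum]
  refine sum_congr rfl fun i _ => ?_
  rw [mul_sum]
  exact sum_congr rfl fun j _ => by ring

theorem pairTerm_comm (hΛ : ∀ a b, (Λ a b : ℚ) / t a = Λ b a / t b) (a b : Fin r) :
    pairTerm t Λ k T a b = pairTerm t Λ k T b a := by
  simp only [pairTerm, hΛ a b, mul_left_comm (t a), mul_comm (T a _)]

theorem pairTerm_of_eq_one {a b : Fin r} (ha : t a = 1) (hb : t b = 1) :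
    pairTerm t Λ k T a b = ∑ j ∈ Icc 1 k, T a j * Λ a b * T b j := by
  simp only [pairTerm, ha, hb, one_mul, ceilDiv_one, Nat.cast_one, div_one, mul_sum]
  exact sum_congr rfl fun j _ => by ring

theorem pairTerm_of_eq_one_of_eq {s : ℕ} (hs : 0 < s) {a b : Fin r} (ha : t a = 1)
    (hb : t b = s) :
    pairTerm t Λ k T a b =
      ∑ j ∈ Icc 1 k, ∑ i ∈ Icc (s * (j - 1) + 1) (s * j), T a j * Λ a b * T b i := by
  simp only [pairTerm, ha, hb, one_mul, ceilDiv_one, Nat.cast_one, div_one, mul_sum]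
  rw [sum_Icc_ceilDiv hs k fun j i => (Λ a b : ℚ) * (T a j * T b i)]
  exact sum_congr rfl fun j _ => sum_congr rfl fun i _ => by ring

theorem pairTerm_of_eq_of_eq {s : ℕ} (hs : 0 < s) {a b : Fin r} (ha : t a = s)
    (hb : t b = s) :
    pairTerm t Λ k T a b =
      ∑ j ∈ Icc 1 k, ∑ i ∈ Icc (s * (j - 1) + 1) (s * j), T a i * Λ a b * T b i := by
  have hs' : (s : ℚ) ≠ 0 := by exact_mod_cast hs.ne'
  simp only [pairTerm, ha, hb]
  rw [sum_Icc_comp_ceilDiv hs _ fun i => T a i * T b i, sum_Icc_mul_eq_sum_sum_Icc, nsmul_eq_mul,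
    ← mul_assoc, div_mul_cancel₀ _ hs', mul_sum]
  exact sum_congr rfl fun j _ => by rw [mul_sum]; exact sum_congr rfl fun i _ => by ring

end PairTerm

theorem sum_sum_filter_split_of_comm {ι R : Type*} [Fintype ι] [CommSemiring R] (p : ι → Prop)
    [DecidablePred p] {f : ι → ι → R} (hf : ∀ a b, f a b = f b a) :
    ∑ a, ∑ b, f a b = ∑ a with p a, ∑ b with p b, f a b +
      2 * ∑ a with p a, ∑ b with ¬ p b, f a b + ∑ a with ¬ p a, ∑ b with ¬ p b, f a b := by
  have hsplit (g : ι → R) : ∑ a, g a = ∑ a with p a, g a + ∑ a with ¬ p a, g a :=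
    (sum_filter_add_sum_filter_not _ _ _).symm
  have hcross : ∑ a with ¬ p a, ∑ b with p b, f a b = ∑ a with p a, ∑ b with ¬ p b, f a b := by
    rw [sum_comm]
    exact sum_congr rfl fun a _ => sum_congr rfl fun b _ => hf b a
  rw [hsplit]
  simp only [hsplit (f _), sum_add_distrib, hcross]
  ring

theorem Lk_telescoped_general
    (r : ℕ) (C : Fin r → Fin r → ℤ) (t : Fin r → ℕ)
    (htpos : ∀ α, 0 < t α)
    (hsym : ∀ α β, (t β : ℤ) * C α β = (t α : ℤ) * C β α)
    (t0 : ℕ) (ht0 : 1 < t0) (htval : ∀ α, t α = 1 ∨ t α = t0)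
    (δ : ℤ) (hδpos : 0 < δ)
    (Λ : Fin r → Fin r → ℤ)
    (hCΛ : ∀ a b, ∑ ω, C a ω * Λ ω b = if a = b then δ else 0)
    (k : ℕ) (n : Fin r → ℕ → ℕ) :
    Lk r t Λ k n = ∑ j ∈ Icc 1 k,
      ((∑ a ∈ univ.filter (fun a => t a = 1), ∑ b ∈ univ.filter (fun b => t b = 1),
          tailSum r t k n a j * (Λ a b : ℚ) * tailSum r t k n b j)
        + ∑ i ∈ Icc (t0 * (j - 1) + 1) (t0 * j),
            ((∑ a ∈ univ.filter (fun a => t a = t0), ∑ b ∈ univ.filter (fun b => t b = t0),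
                tailSum r t k n a i * (Λ a b : ℚ) * tailSum r t k n b i)
              + 2 * ∑ a ∈ univ.filter (fun a => t a = 1),
                  ∑ b ∈ univ.filter (fun b => t b = t0),
                    tailSum r t k n a j * (Λ a b : ℚ) * tailSum r t k n b i)) := by
  have ht0pos : 0 < t0 := by omega
  have hclass (a : Fin r) : ¬ t a = 1 ↔ t a = t0 := by have := htval a; omega
  have hΛ := div_symmetrizer_comm_of_mul_eq htpos hsym hδpos.ne' hCΛ
  rw [Lk_eq_sum_sum_pairTerm k htpos,
    sum_sum_filter_split_of_comm (fun a => t a = 1) (pairTerm_comm k _ hΛ)]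
  simp only [hclass]
  set T := tailSum r t k n
  have hP1 {a} (ha : a ∈ univ.filter fun a => t a = 1) : t a = 1 := (mem_filter.1 ha).2
  have hP0 {a} (ha : a ∈ univ.filter fun a => t a = t0) : t a = t0 := (mem_filter.1 ha).2
  have h11 := (sum_congr rfl fun a ha => sum_congr rfl fun b hb =>
    pairTerm_of_eq_one (Λ := Λ) k T (hP1 ha) (hP1 hb)).trans sum_comm_cycle
  have h10 := (sum_congr rfl fun a ha => sum_congr rfl fun b hb =>
    pairTerm_of_eq_one_of_eq (Λ := Λ) k T ht0pos (hP1 ha) (hP0 hb)).trans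
      (sum_comm_cycle.trans (sum_congr rfl fun _ _ => sum_comm_cycle))
  have h00 := (sum_congr rfl fun a ha => sum_congr rfl fun b hb =>
    pairTerm_of_eq_of_eq (Λ := Λ) k T ht0pos (hP0 ha) (hP0 hb)).trans
      (sum_comm_cycle.trans (sum_congr rfl fun _ _ => sum_comm_cycle))
  rw [h11, h10, h00]
  simp only [sum_add_distrib, mul_sum]
  ring

/-- Equation (4.25) of the paper: the telescoped form of `L_k(n)` for non-simply laced
Cartan data. -/
theorem Lk_telescoped
    (r : ℕ) (C : Fin r → Fin r → ℤ) (t : Fin r → ℕ)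
    (hdiag : ∀ α, C α α = 2)
    (hoff : ∀ α β, α ≠ β → C α β ≤ 0)
    (hzero : ∀ α β, C α β = 0 ↔ C β α = 0)
    (htpos : ∀ α, 0 < t α)
    (htone : ∃ α, t α = 1)
    (hsym : ∀ α β, (t β : ℤ) * C α β = (t α : ℤ) * C β α)
    (hposdef : ∀ v : Fin r → ℚ, v ≠ 0 →
      0 < ∑ α, ∑ β, v α * ((C α β : ℚ) / (t α : ℚ)) * v β)
    (hconn : (SimpleGraph.fromRel fun α β => C α β ≠ 0).Connected)
    (t0 : ℕ) (ht0 : 1 < t0) (htval : ∀ α, t α = 1 ∨ t α = t0) (ht0ex : ∃ α, t α = t0)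
    (δ : ℤ) (hδdet : δ = Matrix.det (Matrix.of fun a b => C a b)) (hδpos : 0 < δ)
    (Λ : Fin r → Fin r → ℤ)
    (hCΛ : ∀ a b, ∑ ω, C a ω * Λ ω b = if a = b then δ else 0)
    (hΛC : ∀ a b, ∑ ω, Λ a ω * C ω b = if a = b then δ else 0)
    (k : ℕ) (hk : 0 < k) (n : Fin r → ℕ → ℕ) :
    Lk r t Λ k n = ∑ j ∈ Icc 1 k,
      ((∑ a ∈ univ.filter (fun a => t a = 1), ∑ b ∈ univ.filter (fun b => t b = 1),
          tailSum r t k n a j * (Λ a b : ℚ) * tailSum r t k n b j)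
        + ∑ i ∈ Icc (t0 * (j - 1) + 1) (t0 * j),
            ((∑ a ∈ univ.filter (fun a => t a = t0), ∑ b ∈ univ.filter (fun b => t b = t0),
                tailSum r t k n a i * (Λ a b : ℚ) * tailSum r t k n b i)
              + 2 * ∑ a ∈ univ.filter (fun a => t a = 1),
                  ∑ b ∈ univ.filter (fun b => t b = t0),
                    tailSum r t k n a j * (Λ a b : ℚ) * tailSum r t k n b i)) :=
  Lk_telescoped_general r C t htpos hsym t0 ht0 htval δ hδpos Λ hCΛ k n
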